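/- arXiv:1303.5148 — 4 statements merged into one kernel-verified Lean document; each statement's English description precedes it below -/
import Mathlib

section
/- With the notation of the confusion-model setting, let r_i(w) ≥ 0 for w ∈ b_i, let S_i(t) = Σ_{w'∈b_i} q(w'|t), and define Q(μ) = Σ_{i=1}^M Σ_{w∈b_i} r_i(w)·log( p_c(ŵ_i|w)·(Σ_t e^{μ_t} q(w|t)) / (Σ_t e^{μ_t} S_i(t)) ). Then for every δ ∈ ℝ^T, Q(μ+δ) − Q(μ) ≥ Σ_{i=1}^M Σ_{w∈b_i} r_i(w)·[ 1 + (Σ_t e^{μ_t} q(w|t) δ_t)/(Σ_t e^{μ_t} q(w|t)) − (Σ_t e^{μ_t+δ_t} S_i(t))/(Σ_t e^{μ_t} S_i(t)) ]. -/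
/-!
Each summand compares `log (p · A'/B')` with `log (p · A/B)`, where `A`, `B` are the
numerator and denominator mixtures at `μ` and `A'`, `B'` those at `μ + δ`; the factor `p`
cancels. Since `A'` is an `exp δ`-reweighting of `A`, Jensen's inequality for `exp` gives
`log (A'/A) ≥ ⟪softmax, δ⟫`, while `-log (B'/B) ≥ 1 - B'/B`. The weights `r i w` are
nonnegative, so these termwise bounds add up.
-/

open Finset

/-- Jensen's inequality for `exp`, read through `log`. -/
lemma sum_mul_div_sum_le_log_sum_mul_exp_sub_log_sum {ι : Type*} {s : Finset ι} (a δ : ι → ℝ)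
    (ha : ∀ t ∈ s, 0 ≤ a t) (hs : 0 < ∑ t ∈ s, a t) :
    (∑ t ∈ s, a t * δ t) / ∑ t ∈ s, a t ≤
      Real.log (∑ t ∈ s, a t * Real.exp (δ t)) - Real.log (∑ t ∈ s, a t) := by
  have hJensen := convexOn_exp.map_centerMass_le ha hs (p := δ) fun t _ => Set.mem_univ _
  simp only [Finset.centerMass, smul_eq_mul, Function.comp_apply] at hJensen
  have hexp : 0 < ∑ t ∈ s, a t * Real.exp (δ t) := by
    exact (mul_pos_iff_of_pos_left (inv_pos.mpr hs)).mp ((Real.exp_pos _).trans_le hJensen)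
  rw [← Real.log_div hexp.ne' hs.ne', Real.le_log_iff_exp_le (div_pos hexp hs),
    div_eq_inv_mul, div_eq_inv_mul]
  exact hJensen

lemma sum_exp_mul_pos {T : Type*} [Fintype T] [Nonempty T] (f g : T → ℝ) (hg : ∀ t, 0 < g t) :
    0 < ∑ t, Real.exp (f t) * g t :=
  Finset.sum_pos (fun t _ => mul_pos (Real.exp_pos _) (hg t)) univ_nonempty

lemma one_add_sub_div_le_log_mul_div_sub_log_mul_div {p A A' B B' x : ℝ} (hp : 0 < p)
    (hA : 0 < A) (hA' : 0 < A') (hB : 0 < B) (hB' : 0 < B')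
    (hx : x ≤ Real.log A' - Real.log A) :
    1 + x - B' / B ≤ Real.log (p * A' / B') - Real.log (p * A / B) := by
  have hB'B : Real.log (B' / B) ≤ B' / B - 1 := Real.log_le_sub_one_of_pos (div_pos hB' hB)
  rw [Real.log_div hB'.ne' hB.ne'] at hB'B
  rw [Real.log_div (by positivity) hB'.ne', Real.log_mul hp.ne' hA'.ne',
    Real.log_div (by positivity) hB.ne', Real.log_mul hp.ne' hA.ne']
  linarith

theorem Q_diff_ge_lower_bound_onebest_general
    {V : Type*} {T : Type*} [Fintype T] [Nonempty T]
    (M : ℕ) (b : Fin M → Finset V) (hb : ∀ i, (b i).Nonempty)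
    (what : Fin M → V)
    (pc : V → V → ℝ) (hpc : ∀ v w, 0 < pc v w)
    (q : V → T → ℝ) (hq : ∀ w t, 0 < q w t)
    (r : Fin M → V → ℝ) (hr : ∀ i, ∀ w ∈ b i, 0 ≤ r i w)
    (μ δ : T → ℝ) :
    (∑ i, ∑ w ∈ b i, r i w *
        Real.log (pc (what i) w * (∑ t, Real.exp (μ t + δ t) * q w t) /
          (∑ t, Real.exp (μ t + δ t) * ∑ w' ∈ b i, q w' t))) -
    (∑ i, ∑ w ∈ b i, r i w *
        Real.log (pc (what i) w * (∑ t, Real.exp (μ t) * q w t) /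
          (∑ t, Real.exp (μ t) * ∑ w' ∈ b i, q w' t))) ≥
    ∑ i, ∑ w ∈ b i, r i w *
      (1 + (∑ t, Real.exp (μ t) * q w t * δ t) / (∑ t, Real.exp (μ t) * q w t)
         - (∑ t, Real.exp (μ t + δ t) * ∑ w' ∈ b i, q w' t) /
             (∑ t, Real.exp (μ t) * ∑ w' ∈ b i, q w' t)) := by
  rw [ge_iff_le, ← Finset.sum_sub_distrib]
  refine Finset.sum_le_sum fun i _ => ?_
  rw [← Finset.sum_sub_distrib]
  refine Finset.sum_le_sum fun w hw => ?_
  rw [← mul_sub]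
  refine mul_le_mul_of_nonneg_left ?_ (hr i w hw)
  have hS : ∀ t, 0 < ∑ w' ∈ b i, q w' t := fun t =>
    Finset.sum_pos (fun w' _ => hq w' t) (hb i)
  have hreweight : ∑ t, Real.exp (μ t + δ t) * q w t =
      ∑ t, Real.exp (μ t) * q w t * Real.exp (δ t) :=
    Finset.sum_congr rfl fun t _ => by rw [Real.exp_add]; ring
  refine one_add_sub_div_le_log_mul_div_sub_log_mul_div (hpc _ _) (sum_exp_mul_pos _ _ (hq w))
    (sum_exp_mul_pos _ _ (hq w)) (sum_exp_mul_pos _ _ hS) (sum_exp_mul_pos _ _ hS) ?_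
  rw [hreweight]
  exact sum_mul_div_sum_le_log_sum_mul_exp_sub_log_sum _ δ
    (fun t _ => (mul_pos (Real.exp_pos _) (hq w t)).le) (sum_exp_mul_pos _ _ (hq w))

/-- Lower bound on the `Q`-difference in the confusion model (1-best case):
combining `-log x ≥ 1 - x` on the denominator ratio with Jensen's inequality
on the numerator ratio.  Here `pc v w = p_c(v|w)`, `q w t = q(w|t)`,
`S_i(t) = ∑_{w' ∈ b i} q w' t`, and `r i w ≥ 0` are posterior weights. -/
theorem Q_diff_ge_lower_bound_onebest
    {V : Type*} [Fintype V] {T : Type*} [Fintype T] [Nonempty T]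
    (M : ℕ) (b : Fin M → Finset V) (hb : ∀ i, (b i).Nonempty)
    (what : Fin M → V) (hwhat : ∀ i, what i ∈ b i)
    (pc : V → V → ℝ) (hpc : ∀ v w, 0 < pc v w)
    (q : V → T → ℝ) (hq : ∀ w t, 0 < q w t)
    (r : Fin M → V → ℝ) (hr : ∀ i, ∀ w ∈ b i, 0 ≤ r i w)
    (μ δ : T → ℝ) :
    (∑ i, ∑ w ∈ b i, r i w *
        Real.log (pc (what i) w * (∑ t, Real.exp (μ t + δ t) * q w t) /
          (∑ t, Real.exp (μ t + δ t) * ∑ w' ∈ b i, q w' t))) -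
    (∑ i, ∑ w ∈ b i, r i w *
        Real.log (pc (what i) w * (∑ t, Real.exp (μ t) * q w t) /
          (∑ t, Real.exp (μ t) * ∑ w' ∈ b i, q w' t))) ≥
    ∑ i, ∑ w ∈ b i, r i w *
      (1 + (∑ t, Real.exp (μ t) * q w t * δ t) / (∑ t, Real.exp (μ t) * q w t)
         - (∑ t, Real.exp (μ t + δ t) * ∑ w' ∈ b i, q w' t) /
             (∑ t, Real.exp (μ t) * ∑ w' ∈ b i, q w' t)) :=
  Q_diff_ge_lower_bound_onebest_general M b hb what pc hpc q hq r hr μ δ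
end

section
/- With the notation of the confusion-model setting, suppose r_i(w) ≥ 0 for all w ∈ b_i and Σ_{w∈b_i} r_i(w) = 1 for every bin i. Let S_i(t) = Σ_{w'∈b_i} q(w'|t), and define g(δ) = Σ_{i=1}^M Σ_{w∈b_i} r_i(w)·[ 1 + (Σ_t e^{μ_t} q(w|t) δ_t)/(Σ_t e^{μ_t} q(w|t)) − (Σ_t e^{μ_t+δ_t} S_i(t))/(Σ_t e^{μ_t} S_i(t)) ]. Set A_t = Σ_{i=1}^M Σ_{w∈b_i} r_i(w)·e^{μ_t} q(w|t)/(Σ_{t'} e^{μ_{t'}} q(w|t')) and B_t = Σ_{i=1}^M S_i(t)/(Σ_{t'} e^{μ_{t'}} S_i(t')). If A_t > 0 for every t, then the vector δ* defined by e^{μ_t + δ*_t} = A_t / B_t (i.e., δ*_t = log(A_t/B_t) − μ_t) is a global maximizer of g over ℝ^T. -/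
/-!
After exchanging the order of summation, `g` separates over topics:
`g δ = M + ∑ₜ A t δ t - ∑ₜ B t e^{μ t + δ t}`, using `∑_{w ∈ b i} r i w = 1` for the constant and
the exponential part. Each summand `a y - b e^y` (with `y = μ t + δ t`) is maximized at
`e^y = a / b`, by the tangent-line bound `1 + x ≤ e^x` at `x = y - log (a / b)`.
-/

open Finset Real

theorem mul_sub_exp_mul_le {a b : ℝ} (ha : 0 < a) (hb : 0 < b) (y : ℝ) :
    a * y - exp y * b ≤ a * log (a / b) - a := by
  set s := log (a / b)
  have hs : exp s * b = a := by
    rw [exp_log (div_pos ha hb), div_mul_cancel₀ a hb.ne']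
  have hy : exp y * b = a * exp (y - s) := by
    rw [← hs, mul_right_comm, ← exp_add, add_sub_cancel]
  calc a * y - exp y * b = a * y - a * exp (y - s) := by rw [hy]
    _ ≤ a * y - a * (y - s + 1) := by gcongr; exact add_one_le_exp _
    _ = a * s - a := by ring

theorem sum_mul_sub_sum_exp_mul_le {T : Type*} [Fintype T] {a b : T → ℝ}
    (ha : ∀ t, 0 < a t) (hb : ∀ t, 0 < b t) (c x : T → ℝ) :
    ∑ t, a t * x t - ∑ t, exp (c t + x t) * b t ≤
      ∑ t, a t * (log (a t / b t) - c t) - ∑ t, exp (c t + (log (a t / b t) - c t)) * b t := by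
  rw [← sum_sub_distrib, ← sum_sub_distrib]
  refine sum_le_sum fun t _ => ?_
  have key := mul_sub_exp_mul_le (ha t) (hb t) (c t + x t)
  rw [add_sub_cancel, exp_log (div_pos (ha t) (hb t)), div_mul_cancel₀ _ (hb t).ne']
  linarith

theorem sum_mul_one_add_sub {V : Type*} {s : Finset V} {r : V → ℝ} (hr : ∑ w ∈ s, r w = 1)
    (x : V → ℝ) (c : ℝ) :
    ∑ w ∈ s, r w * (1 + x w - c) = 1 + ∑ w ∈ s, r w * x w - c := by
  simp only [mul_sub, mul_add, mul_one, sum_sub_distrib, sum_add_distrib, ← sum_mul, hr, one_mul]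

theorem sum_sum_mul_weighted_mean {ι V T : Type*} [Fintype ι] [Fintype T]
    (b : ι → Finset V) (r : ι → V → ℝ) (u : V → T → ℝ) (δ : T → ℝ) :
    ∑ i, ∑ w ∈ b i, r i w * ((∑ t, u w t * δ t) / ∑ t, u w t) =
      ∑ t, (∑ i, ∑ w ∈ b i, r i w * u w t / ∑ t', u w t') * δ t := by
  simp only [sum_div, mul_sum, sum_mul]
  rw [sum_comm]
  refine sum_congr rfl fun i _ => ?_
  rw [sum_comm]
  exact sum_congr rfl fun w _ => sum_congr rfl fun t _ => by ring

theorem sum_sum_mul_div {ι T : Type*} [Fintype ι] [Fintype T]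
    (v : T → ℝ) (S : ι → T → ℝ) (Z : ι → ℝ) :
    ∑ i, (∑ t, v t * S i t) / Z i = ∑ t, v t * ∑ i, S i t / Z i := by
  simp only [sum_div, mul_sum]
  rw [sum_comm]
  exact sum_congr rfl fun t _ => sum_congr rfl fun i _ => mul_div_assoc _ _ _

theorem lowerBound_eq_linear_sub_exp {ι V T : Type*} [Fintype ι] [Fintype T]
    (b : ι → Finset V) (q : V → T → ℝ) (r : ι → V → ℝ) (hrsum : ∀ i, ∑ w ∈ b i, r i w = 1)
    (μ δ : T → ℝ) :
    ∑ i, ∑ w ∈ b i, r i w *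
      (1 + (∑ t, exp (μ t) * q w t * δ t) / (∑ t, exp (μ t) * q w t)
         - (∑ t, exp (μ t + δ t) * ∑ w' ∈ b i, q w' t) /
             (∑ t, exp (μ t) * ∑ w' ∈ b i, q w' t)) =
      Fintype.card ι
        + ∑ t, (∑ i, ∑ w ∈ b i, r i w * (exp (μ t) * q w t) / ∑ t', exp (μ t') * q w t') * δ t
        - ∑ t, exp (μ t + δ t) *
            ∑ i, (∑ w' ∈ b i, q w' t) / ∑ t', exp (μ t') * ∑ w' ∈ b i, q w' t' := by
  simp only [sum_mul_one_add_sub (hrsum _), sum_sub_distrib, sum_add_distrib, sum_const,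
    card_univ, nsmul_eq_mul, mul_one]
  rw [sum_sum_mul_weighted_mean b r (fun w t => exp (μ t) * q w t), sum_sum_mul_div]

theorem update_onebest_maximizes_lower_bound_general
    {V : Type*} {T : Type*} [Fintype T]
    (M : ℕ) (b : Fin M → Finset V)
    (q : V → T → ℝ) (hq : ∀ w t, 0 < q w t)
    (r : Fin M → V → ℝ)
    (hrsum : ∀ i, ∑ w ∈ b i, r i w = 1)
    (μ : T → ℝ)
    (A B : T → ℝ)
    (hA : ∀ t, A t = ∑ i, ∑ w ∈ b i,
        r i w * (Real.exp (μ t) * q w t) / ∑ t', Real.exp (μ t') * q w t')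
    (hB : ∀ t, B t = ∑ i, (∑ w' ∈ b i, q w' t) /
        ∑ t', Real.exp (μ t') * ∑ w' ∈ b i, q w' t')
    (hApos : ∀ t, 0 < A t)
    (g : (T → ℝ) → ℝ)
    (hg : ∀ δ : T → ℝ, g δ = ∑ i, ∑ w ∈ b i, r i w *
      (1 + (∑ t, Real.exp (μ t) * q w t * δ t) / (∑ t, Real.exp (μ t) * q w t)
         - (∑ t, Real.exp (μ t + δ t) * ∑ w' ∈ b i, q w' t) /
             (∑ t, Real.exp (μ t) * ∑ w' ∈ b i, q w' t))) :
    ∀ δ : T → ℝ, g δ ≤ g (fun t => Real.log (A t / B t) - μ t) := by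
  have hbin (i : Fin M) : (b i).Nonempty :=
    nonempty_of_sum_ne_zero ((hrsum i).symm ▸ one_ne_zero)
  have hBpos (t : T) : 0 < B t := by
    have hM : (univ : Finset (Fin M)).Nonempty :=
      nonempty_of_sum_ne_zero (hA t ▸ (hApos t).ne')
    rw [hB t]
    refine sum_pos (fun i _ => div_pos (sum_pos (fun w _ => hq w t) (hbin i)) ?_) hM
    exact sum_pos (fun t' _ => mul_pos (exp_pos _) (sum_pos (fun w _ => hq w t') (hbin i)))
      ⟨t, mem_univ t⟩
  intro δ
  simp only [hg, lowerBound_eq_linear_sub_exp b q r hrsum, ← hA, ← hB]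
  linarith [sum_mul_sub_sum_exp_mul_le hApos hBpos μ δ]

/-- The paper's update equation (1-best confusion model): the vector `δ*`
defined by `e^{μ t + δ* t} = A t / B t`, i.e. `δ* t = log (A t / B t) - μ t`,
is a global maximizer over `ℝ^T` of the concave lower bound `g`. -/
theorem update_onebest_maximizes_lower_bound
    {V : Type*} [Fintype V] {T : Type*} [Fintype T] [Nonempty T]
    (M : ℕ) (b : Fin M → Finset V) (hb : ∀ i, (b i).Nonempty)
    (q : V → T → ℝ) (hq : ∀ w t, 0 < q w t)
    (r : Fin M → V → ℝ) (hr : ∀ i, ∀ w ∈ b i, 0 ≤ r i w)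
    (hrsum : ∀ i, ∑ w ∈ b i, r i w = 1)
    (μ : T → ℝ)
    (A B : T → ℝ)
    (hA : ∀ t, A t = ∑ i, ∑ w ∈ b i,
        r i w * (Real.exp (μ t) * q w t) / ∑ t', Real.exp (μ t') * q w t')
    (hB : ∀ t, B t = ∑ i, (∑ w' ∈ b i, q w' t) /
        ∑ t', Real.exp (μ t') * ∑ w' ∈ b i, q w' t')
    (hApos : ∀ t, 0 < A t)
    (g : (T → ℝ) → ℝ)
    (hg : ∀ δ : T → ℝ, g δ = ∑ i, ∑ w ∈ b i, r i w *
      (1 + (∑ t, Real.exp (μ t) * q w t * δ t) / (∑ t, Real.exp (μ t) * q w t)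
         - (∑ t, Real.exp (μ t + δ t) * ∑ w' ∈ b i, q w' t) /
             (∑ t, Real.exp (μ t) * ∑ w' ∈ b i, q w' t))) :
    ∀ δ : T → ℝ, g δ ≤ g (fun t => Real.log (A t / B t) - μ t) :=
  update_onebest_maximizes_lower_bound_general M b q hq r hrsum μ A B hA hB hApos g hg
end

section
/- With the notation of the confusion-model setting, define the log-likelihood L(μ) = Σ_{i=1}^M log( Σ_{w∈b_i} (q_μ(w)/Σ_{w'∈b_i} q_μ(w'))·p_c(ŵ_i|w) ), where q_μ(w) = Σ_t e^{μ_t} q(w|t) / Σ_{t'} e^{μ_{t'}}. Given μ ∈ ℝ^T, let r_i(w) = q_μ(w)·p_c(ŵ_i|w) / Σ_{w'∈b_i} q_μ(w')·p_c(ŵ_i|w') be the bin posteriors, let S_i(t) = Σ_{w'∈b_i} q(w'|t), A_t = Σ_i Σ_{w∈b_i} r_i(w)·e^{μ_t} q(w|t)/(Σ_{t'} e^{μ_{t'}} q(w|t')), B_t = Σ_i S_i(t)/(Σ_{t'} e^{μ_{t'}} S_i(t')), and define the update δ* by e^{μ_t+δ*_t} = A_t/B_t, assuming A_t > 0 for all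 t. Then L(μ + δ*) ≥ L(μ). -/
/-!
With `f_ρ(w) = ∑ₜ e^{ρₜ} q(w|t)` the normalisation `∑ₜ e^{ρₜ}` cancels in `L`, so
`L(ρ) = ∑ᵢ (log ∑_{w∈bᵢ} f_ρ(w) p_c(ŵᵢ|w) - log ∑_{w∈bᵢ} f_ρ(w))`.
Jensen's inequality applied twice to the first term (over the bin posterior `rᵢ`, then over the
topic posterior of each word) and `log x ≤ x - 1` applied to the second give
`L(μ + δ) - L(μ) ≥ g(δ) = ∑ₜ δₜ Aₜ + M - ∑ₜ e^{μₜ+δₜ} Bₜ`.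
At the update `e^{μₜ+δ*ₜ} Bₜ = Aₜ`, so `g(δ*) = ∑ₜ Aₜ log (Aₜ / e^{μₜ} Bₜ) + M - ∑ₜ Aₜ`; since
`∑ₜ Aₜ = M = ∑ₜ e^{μₜ} Bₜ`, Gibbs' inequality gives `g(δ*) ≥ 0`.
-/

open Finset Real

section Inequalities

variable {ι : Type*} {s : Finset ι}

theorem sum_mul_log_le_log_sum_mul {w p : ι → ℝ} (hw : ∀ i ∈ s, 0 ≤ w i)
    (hw₁ : ∑ i ∈ s, w i = 1) (hp : ∀ i ∈ s, 0 < p i) :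
    ∑ i ∈ s, w i * log (p i) ≤ log (∑ i ∈ s, w i * p i) := by
  simpa only [smul_eq_mul] using strictConcaveOn_log_Ioi.concaveOn.le_map_sum hw hw₁ hp

theorem sum_sub_sum_le_sum_mul_log_div {a c : ι → ℝ} (ha : ∀ i ∈ s, 0 < a i)
    (hc : ∀ i ∈ s, 0 < c i) :
    ∑ i ∈ s, a i - ∑ i ∈ s, c i ≤ ∑ i ∈ s, a i * log (a i / c i) := by
  rw [← sum_sub_distrib]
  refine sum_le_sum fun i hi => ?_
  have hlog := one_sub_inv_le_log_of_pos (div_pos (ha i hi) (hc i hi))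
  rw [inv_div] at hlog
  calc a i - c i = a i * (1 - c i / a i) := by rw [mul_one_sub, mul_div_cancel₀ _ (ha i hi).ne']
    _ ≤ a i * log (a i / c i) := mul_le_mul_of_nonneg_left hlog (ha i hi).le

end Inequalities

namespace ConfusionEM

noncomputable section

variable {ι V T : Type*} [Fintype T] (q : V → T → ℝ) (b : ι → Finset V) (c : ι → V → ℝ)

/- `mixture q ρ` is `f_ρ`; `topicDist`, `posterior`, `expectedCount` and `exposure` are the
paper's `q_ρ`, `rᵢ`, `A_t` and `B_t`, and `c i w` stands for `p_c(ŵᵢ|w)`. -/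

def mixture (ρ : T → ℝ) (w : V) : ℝ := ∑ t, exp (ρ t) * q w t

def topicDist (ρ : T → ℝ) (w : V) : ℝ := mixture q ρ w / ∑ t, exp (ρ t)

def binLik (ρ : T → ℝ) (i : ι) : ℝ := ∑ w ∈ b i, mixture q ρ w * c i w

def binMass (ρ : T → ℝ) (i : ι) : ℝ := ∑ w ∈ b i, mixture q ρ w

def posterior (μ : T → ℝ) (i : ι) (w : V) : ℝ :=
  topicDist q μ w * c i w / ∑ w' ∈ b i, topicDist q μ w' * c i w'

variable {q b c}

theorem mixture_pos [Nonempty T] (hq : ∀ w t, 0 < q w t) (ρ : T → ℝ) (w : V) :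
    0 < mixture q ρ w :=
  sum_pos (fun t _ => mul_pos (exp_pos _) (hq w t)) univ_nonempty

theorem binLik_pos [Nonempty T] (hq : ∀ w t, 0 < q w t) (hc : ∀ i, ∀ w ∈ b i, 0 < c i w)
    (hb : ∀ i, (b i).Nonempty) (ρ : T → ℝ) (i : ι) : 0 < binLik q b c ρ i :=
  sum_pos (fun w hw => mul_pos (mixture_pos hq ρ w) (hc i w hw)) (hb i)

theorem binMass_pos [Nonempty T] (hq : ∀ w t, 0 < q w t) (hb : ∀ i, (b i).Nonempty)
    (ρ : T → ℝ) (i : ι) : 0 < binMass q b ρ i :=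
  sum_pos (fun w _ => mixture_pos hq ρ w) (hb i)

theorem binMass_eq_sum_exp_mul (ρ : T → ℝ) (i : ι) :
    binMass q b ρ i = ∑ t, exp (ρ t) * ∑ w ∈ b i, q w t := by
  simp only [binMass, mixture, mul_sum]
  exact sum_comm

theorem posterior_eq [Nonempty T] (μ : T → ℝ) (i : ι) (w : V) :
    posterior q b c μ i w = mixture q μ w * c i w / binLik q b c μ i := by
  have hZ : ∑ t, exp (μ t) ≠ 0 := (sum_pos (fun t _ => exp_pos _) univ_nonempty).ne'
  simp only [posterior, topicDist, div_mul_eq_mul_div, ← sum_div,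
    div_div_div_cancel_right₀ hZ, binLik]

theorem posterior_pos [Nonempty T] (hq : ∀ w t, 0 < q w t) (hc : ∀ i, ∀ w ∈ b i, 0 < c i w)
    (hb : ∀ i, (b i).Nonempty) (μ : T → ℝ) (i : ι) {w : V} (hw : w ∈ b i) :
    0 < posterior q b c μ i w := by
  rw [posterior_eq]
  exact div_pos (mul_pos (mixture_pos hq μ w) (hc i w hw)) (binLik_pos hq hc hb μ i)

theorem sum_posterior [Nonempty T] (hq : ∀ w t, 0 < q w t) (hc : ∀ i, ∀ w ∈ b i, 0 < c i w)
    (hb : ∀ i, (b i).Nonempty) (μ : T → ℝ) (i : ι) :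
    ∑ w ∈ b i, posterior q b c μ i w = 1 := by
  simp only [posterior_eq, ← sum_div]
  exact div_self (binLik_pos hq hc hb μ i).ne'

theorem sum_mul_le_log_mixture_div [Nonempty T] (hq : ∀ w t, 0 < q w t) (μ δ : T → ℝ) (w : V) :
    ∑ t, exp (μ t) * q w t / mixture q μ w * δ t ≤ log (mixture q (μ + δ) w / mixture q μ w) := by
  have hm := mixture_pos hq μ w
  have hweights : ∑ t, exp (μ t) * q w t / mixture q μ w = 1 := by
    rw [← sum_div]; exact div_self hm.ne'
  have hmean : ∑ t, exp (μ t) * q w t / mixture q μ w * exp (δ t)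
      = mixture q (μ + δ) w / mixture q μ w := by
    simp only [mixture, sum_div, Pi.add_apply, exp_add]
    exact sum_congr rfl fun t _ => by ring
  simpa only [log_exp, hmean] using sum_mul_log_le_log_sum_mul
    (fun t _ => (div_pos (mul_pos (exp_pos _) (hq w t)) hm).le) hweights
    (fun t _ => exp_pos (δ t))

theorem sum_posterior_mul_log_le [Nonempty T] (hq : ∀ w t, 0 < q w t)
    (hc : ∀ i, ∀ w ∈ b i, 0 < c i w) (hb : ∀ i, (b i).Nonempty) (μ ν : T → ℝ) (i : ι) :
    ∑ w ∈ b i, posterior q b c μ i w * log (mixture q ν w / mixture q μ w)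
      ≤ log (binLik q b c ν i) - log (binLik q b c μ i) := by
  have hmean : ∑ w ∈ b i, posterior q b c μ i w * (mixture q ν w / mixture q μ w)
      = binLik q b c ν i / binLik q b c μ i := by
    simp only [posterior_eq, binLik, sum_div]
    refine sum_congr rfl fun w _ => ?_
    field_simp [(mixture_pos hq μ w).ne']
  rw [← log_div (binLik_pos hq hc hb ν i).ne' (binLik_pos hq hc hb μ i).ne', ← hmean]
  exact sum_mul_log_le_log_sum_mul (fun w hw => (posterior_pos hq hc hb μ i hw).le)
    (sum_posterior hq hc hb μ i) (fun w _ => div_pos (mixture_pos hq ν w) (mixture_pos hq μ w))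

variable (q b c) [Fintype ι]

def logLik (ρ : T → ℝ) : ℝ :=
  ∑ i, log (∑ w ∈ b i, topicDist q ρ w / (∑ w' ∈ b i, topicDist q ρ w') * c i w)

def expectedCount (μ : T → ℝ) (t : T) : ℝ :=
  ∑ i, ∑ w ∈ b i, posterior q b c μ i w * (exp (μ t) * q w t) / mixture q μ w

def exposure (μ : T → ℝ) (t : T) : ℝ :=
  ∑ i, (∑ w ∈ b i, q w t) / ∑ t', exp (μ t') * ∑ w ∈ b i, q w t'

variable {q b c}

theorem logLik_eq [Nonempty T] (hq : ∀ w t, 0 < q w t) (hc : ∀ i, ∀ w ∈ b i, 0 < c i w)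
    (hb : ∀ i, (b i).Nonempty) (ρ : T → ℝ) :
    logLik q b c ρ = ∑ i, (log (binLik q b c ρ i) - log (binMass q b ρ i)) := by
  refine sum_congr rfl fun i _ => ?_
  have hZ : ∑ t, exp (ρ t) ≠ 0 := (sum_pos (fun t _ => exp_pos _) univ_nonempty).ne'
  have hratio : ∑ w ∈ b i, topicDist q ρ w / (∑ w' ∈ b i, topicDist q ρ w') * c i w
      = binLik q b c ρ i / binMass q b ρ i := by
    simp only [topicDist, ← sum_div, div_div_div_cancel_right₀ hZ, binLik, binMass,
      div_mul_eq_mul_div]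
  rw [hratio, log_div (binLik_pos hq hc hb ρ i).ne' (binMass_pos hq hb ρ i).ne']

theorem exposure_eq (μ : T → ℝ) (t : T) :
    exposure q b μ t = ∑ i, (∑ w ∈ b i, q w t) / binMass q b μ i := by
  simp only [exposure, binMass_eq_sum_exp_mul]

theorem sum_exp_mul_exposure (ρ μ : T → ℝ) :
    ∑ t, exp (ρ t) * exposure q b μ t = ∑ i, binMass q b ρ i / binMass q b μ i := by
  simp_rw [exposure_eq, mul_sum]
  rw [sum_comm]
  refine sum_congr rfl fun i _ => ?_
  rw [binMass_eq_sum_exp_mul ρ, sum_div]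
  exact sum_congr rfl fun t _ => mul_div_assoc' _ _ _

theorem sum_expectedCount [Nonempty T] (hq : ∀ w t, 0 < q w t)
    (hc : ∀ i, ∀ w ∈ b i, 0 < c i w) (hb : ∀ i, (b i).Nonempty) (μ : T → ℝ) :
    ∑ t, expectedCount q b c μ t = Fintype.card ι :=
  calc ∑ t, expectedCount q b c μ t
      = ∑ i, ∑ w ∈ b i, posterior q b c μ i w * (∑ t, exp (μ t) * q w t) / mixture q μ w := by
        simp only [expectedCount, mul_sum, sum_div]
        rw [sum_comm]
        exact sum_congr rfl fun i _ => sum_comm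
    _ = ∑ i, ∑ w ∈ b i, posterior q b c μ i w :=
        sum_congr rfl fun i _ => sum_congr rfl fun w _ =>
          mul_div_cancel_right₀ _ (mixture_pos hq μ w).ne'
    _ = Fintype.card ι := by simp [sum_posterior hq hc hb μ]

theorem sum_mul_expectedCount_le [Nonempty T] (hq : ∀ w t, 0 < q w t)
    (hc : ∀ i, ∀ w ∈ b i, 0 < c i w) (hb : ∀ i, (b i).Nonempty) (μ δ : T → ℝ) :
    ∑ t, δ t * expectedCount q b c μ t
      ≤ ∑ i, (log (binLik q b c (μ + δ) i) - log (binLik q b c μ i)) :=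
  calc ∑ t, δ t * expectedCount q b c μ t
      = ∑ i, ∑ w ∈ b i, posterior q b c μ i w *
          ∑ t, exp (μ t) * q w t / mixture q μ w * δ t := by
        simp only [expectedCount, mul_sum]
        rw [sum_comm]
        refine sum_congr rfl fun i _ => ?_
        rw [sum_comm]
        exact sum_congr rfl fun w _ => sum_congr rfl fun t _ => by ring
    _ ≤ ∑ i, ∑ w ∈ b i, posterior q b c μ i w * log (mixture q (μ + δ) w / mixture q μ w) :=
        sum_le_sum fun i _ => sum_le_sum fun w hw => mul_le_mul_of_nonneg_left
          (sum_mul_le_log_mixture_div hq μ δ w) (posterior_pos hq hc hb μ i hw).le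
    _ ≤ _ := sum_le_sum fun i _ => sum_posterior_mul_log_le hq hc hb μ (μ + δ) i

theorem card_sub_sum_exp_mul_exposure_le [Nonempty T] (hq : ∀ w t, 0 < q w t)
    (hb : ∀ i, (b i).Nonempty) (μ ν : T → ℝ) :
    Fintype.card ι - ∑ t, exp (ν t) * exposure q b μ t
      ≤ ∑ i, (log (binMass q b μ i) - log (binMass q b ν i)) := by
  rw [sum_exp_mul_exposure, ← nsmul_one, ← card_univ, ← sum_const, ← sum_sub_distrib]
  refine sum_le_sum fun i _ => ?_
  have hlog := log_le_sub_one_of_pos (div_pos (binMass_pos hq hb ν i) (binMass_pos hq hb μ i))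
  rw [log_div (binMass_pos hq hb ν i).ne' (binMass_pos hq hb μ i).ne'] at hlog
  linarith

theorem sum_exp_mul_exposure_self [Nonempty T] (hq : ∀ w t, 0 < q w t)
    (hb : ∀ i, (b i).Nonempty) (μ : T → ℝ) :
    ∑ t, exp (μ t) * exposure q b μ t = Fintype.card ι := by
  simp [sum_exp_mul_exposure, div_self (binMass_pos hq hb μ _).ne']

theorem surrogate_le_logLik_add_sub [Nonempty T] (hq : ∀ w t, 0 < q w t)
    (hc : ∀ i, ∀ w ∈ b i, 0 < c i w) (hb : ∀ i, (b i).Nonempty) (μ δ : T → ℝ) :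
    ∑ t, δ t * expectedCount q b c μ t + Fintype.card ι
        - ∑ t, exp (μ t + δ t) * exposure q b μ t
      ≤ logLik q b c (μ + δ) - logLik q b c μ := by
  have hnum := sum_mul_expectedCount_le hq hc hb μ δ
  have hden : Fintype.card ι - ∑ t, exp (μ t + δ t) * exposure q b μ t
      ≤ ∑ i, (log (binMass q b μ i) - log (binMass q b (μ + δ) i)) :=
    card_sub_sum_exp_mul_exposure_le hq hb μ (μ + δ)
  rw [logLik_eq hq hc hb, logLik_eq hq hc hb]
  simp only [sum_sub_distrib] at hnum hden ⊢
  linarith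

theorem logLik_le_logLik_add_of_exp_eq_div [Nonempty T] (hq : ∀ w t, 0 < q w t)
    (hc : ∀ i, ∀ w ∈ b i, 0 < c i w) (hb : ∀ i, (b i).Nonempty) {μ δ : T → ℝ}
    (hA : ∀ t, 0 < expectedCount q b c μ t)
    (hδ : ∀ t, exp (μ t + δ t) = expectedCount q b c μ t / exposure q b μ t) :
    logLik q b c μ ≤ logLik q b c (μ + δ) := by
  set A := expectedCount q b c μ
  set B := exposure q b μ
  have hB : ∀ t, 0 < B t := fun t => (div_pos_iff_of_pos_left (hA t)).mp (hδ t ▸ exp_pos _)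
  have hδ_eq : ∀ t, δ t = log (A t / (exp (μ t) * B t)) := fun t => by
    rw [mul_comm, ← div_div, ← hδ t, exp_add, mul_div_cancel_left₀ _ (exp_pos _).ne', log_exp]
  have hupdate : ∑ t, exp (μ t + δ t) * B t = ∑ t, A t :=
    sum_congr rfl fun t _ => by rw [hδ t, div_mul_cancel₀ _ (hB t).ne']
  have hgibbs : ∑ t, A t - ∑ t, exp (μ t) * B t ≤ ∑ t, δ t * A t := by
    simpa only [hδ_eq, mul_comm (A _)] using sum_sub_sum_le_sum_mul_log_div (s := univ)
      (fun t _ => hA t) (fun t _ => mul_pos (exp_pos (μ t)) (hB t))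
  have hlower := surrogate_le_logLik_add_sub hq hc hb μ δ
  rw [hupdate, sum_expectedCount hq hc hb] at hlower
  rw [sum_expectedCount hq hc hb, sum_exp_mul_exposure_self hq hb] at hgibbs
  linarith

end

end ConfusionEM

theorem em_update_increases_loglik_general
    {V : Type*} {T : Type*} [Fintype T] [Nonempty T]
    (M : ℕ) (b : Fin M → Finset V) (hb : ∀ i, (b i).Nonempty)
    (what : Fin M → V)
    (pc : V → V → ℝ) (hpc : ∀ v w, 0 < pc v w)
    (q : V → T → ℝ) (hq : ∀ w t, 0 < q w t)
    (μ : T → ℝ)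
    (L : (T → ℝ) → ℝ)
    (hL : ∀ ν : T → ℝ, L ν = ∑ i, Real.log (∑ w ∈ b i,
      (((∑ t, Real.exp (ν t) * q w t) / ∑ t', Real.exp (ν t')) /
        ∑ w' ∈ b i, (∑ t, Real.exp (ν t) * q w' t) / ∑ t', Real.exp (ν t')) *
        pc (what i) w))
    (qmu : V → ℝ)
    (hqmu : ∀ w, qmu w = (∑ t, Real.exp (μ t) * q w t) / ∑ t', Real.exp (μ t'))
    (r : Fin M → V → ℝ)
    (hr : ∀ i, ∀ w ∈ b i,
      r i w = qmu w * pc (what i) w / ∑ w' ∈ b i, qmu w' * pc (what i) w')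
    (A B : T → ℝ)
    (hA : ∀ t, A t = ∑ i, ∑ w ∈ b i,
        r i w * (Real.exp (μ t) * q w t) / ∑ t', Real.exp (μ t') * q w t')
    (hB : ∀ t, B t = ∑ i, (∑ w' ∈ b i, q w' t) /
        ∑ t', Real.exp (μ t') * ∑ w' ∈ b i, q w' t')
    (hApos : ∀ t, 0 < A t)
    (δstar : T → ℝ)
    (hδstar : ∀ t, Real.exp (μ t + δstar t) = A t / B t) :
    L (fun t => μ t + δstar t) ≥ L μ := by
  set c : Fin M → V → ℝ := fun i w => pc (what i) w
  obtain rfl : qmu = ConfusionEM.topicDist q μ := funext hqmu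
  obtain rfl : A = ConfusionEM.expectedCount q b c μ := funext fun t =>
    (hA t).trans (sum_congr rfl fun i _ => sum_congr rfl fun w hw => by rw [hr i w hw]; rfl)
  obtain rfl : B = ConfusionEM.exposure q b μ := funext hB
  rw [hL, hL]
  exact ConfusionEM.logLik_le_logLik_add_of_exp_eq_div hq (fun i w _ => hpc _ _) hb hApos hδstar

/-- Monotonicity of the EM procedure with the confusion model: one update step
`μ ↦ μ + δ*`, with `δ*` given by the paper's update equation
`e^{μ t + δ* t} = A t / B t`, does not decrease the log-likelihood `L`. -/
theorem em_update_increases_loglik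
    {V : Type*} [Fintype V] {T : Type*} [Fintype T] [Nonempty T]
    (M : ℕ) (b : Fin M → Finset V) (hb : ∀ i, (b i).Nonempty)
    (what : Fin M → V) (hwhat : ∀ i, what i ∈ b i)
    (pc : V → V → ℝ) (hpc : ∀ v w, 0 < pc v w)
    (q : V → T → ℝ) (hq : ∀ w t, 0 < q w t)
    (μ : T → ℝ)
    (L : (T → ℝ) → ℝ)
    (hL : ∀ ν : T → ℝ, L ν = ∑ i, Real.log (∑ w ∈ b i,
      (((∑ t, Real.exp (ν t) * q w t) / ∑ t', Real.exp (ν t')) /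
        ∑ w' ∈ b i, (∑ t, Real.exp (ν t) * q w' t) / ∑ t', Real.exp (ν t')) *
        pc (what i) w))
    (qmu : V → ℝ)
    (hqmu : ∀ w, qmu w = (∑ t, Real.exp (μ t) * q w t) / ∑ t', Real.exp (μ t'))
    (r : Fin M → V → ℝ)
    (hr : ∀ i, ∀ w ∈ b i,
      r i w = qmu w * pc (what i) w / ∑ w' ∈ b i, qmu w' * pc (what i) w')
    (A B : T → ℝ)
    (hA : ∀ t, A t = ∑ i, ∑ w ∈ b i,
        r i w * (Real.exp (μ t) * q w t) / ∑ t', Real.exp (μ t') * q w t')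
    (hB : ∀ t, B t = ∑ i, (∑ w' ∈ b i, q w' t) /
        ∑ t', Real.exp (μ t') * ∑ w' ∈ b i, q w' t')
    (hApos : ∀ t, 0 < A t)
    (δstar : T → ℝ)
    (hδstar : ∀ t, Real.exp (μ t + δstar t) = A t / B t) :
    L (fun t => μ t + δstar t) ≥ L μ :=
  em_update_increases_loglik_general M b hb what pc hpc q hq μ L hL qmu hqmu r hr A B hA hB hApos
    δstar hδstar
end

section
/- With the notation of the confusion-model setting, suppose s_i(w') ≥ 0 with Σ_{w'∈b_i} s_i(w') = 1 and r_i(w|w') ≥ 0 with Σ_{w∈b_i} r_i(w|w') = 1 for every i and w' ∈ b_i. Let S_i(t) = Σ_{w'∈b_i} q(w'|t), and define g(δ) = Σ_{i=1}^M Σ_{w,w'∈b_i} r_i(w|w')·s_i(w')·[ 1 + (Σ_t e^{μ_t} q(w|t) δ_t)/(Σ_t e^{μ_t} q(w|t)) − (Σ_t e^{μ_t+δ_t} S_i(t))/(Σ_t e^{μ_t} S_i(t)) ]. Set A_t = Σ_i Σ_{w,w'∈b_i} r_i(w|w')·s_i(w')·e^{μ_t} q(w|t)/(Σ_{t'} e^{μ_{t'}}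 q(w|t')) and B_t = Σ_i S_i(t)/(Σ_{t'} e^{μ_{t'}} S_i(t')). If A_t > 0 for every t, then the vector δ* defined by e^{μ_t+δ*_t} = A_t/B_t is a global maximizer of g over ℝ^T. -/
/-!
Regrouping the sums with the per-bin normalisation `∑_w ∑_w' r_i(w|w') s_i(w') = 1` gives
`g δ = M + ∑_t (A_t δ_t - B_t e^{μ_t + δ_t})`, which separates over topics. Each summand
`a y - b e^y` (with `y = μ_t + δ_t`) is maximised at `e^y = a / b`, by `e^z ≥ 1 + z`.
-/

open Finset Real

lemma mul_sub_mul_exp_le {a b : ℝ} (ha : 0 < a) (hb : 0 < b) (y : ℝ) :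
    a * y - b * exp y ≤ a * log (a / b) - a := by
  have hab : 0 < a / b := div_pos ha hb
  have hexp : b * exp y = a * exp (y - log (a / b)) := by
    rw [exp_sub, exp_log hab]
    field_simp
  have := mul_le_mul_of_nonneg_left (add_one_le_exp (y - log (a / b))) ha.le
  linarith

lemma sum_sum_mul_eq_one {α : Type*} {s : Finset α} {r : α → α → ℝ} {p : α → ℝ}
    (hr : ∀ j ∈ s, ∑ i ∈ s, r i j = 1) (hp : ∑ j ∈ s, p j = 1) :
    ∑ i ∈ s, ∑ j ∈ s, r i j * p j = 1 := by
  rw [sum_comm, ← hp]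
  refine sum_congr rfl fun j hj => ?_
  rw [← sum_mul, hr j hj, one_mul]

section NestedSums

variable {ι α τ : Type*} [Fintype ι] [Fintype τ] (b : ι → Finset α) (ρ : ι → α → α → ℝ)

lemma sum_sum_sum_mul_weighted_average (c : α → τ → ℝ) (δ : τ → ℝ) :
    ∑ i, ∑ w ∈ b i, ∑ w' ∈ b i, ρ i w w' * ((∑ t, c w t * δ t) / ∑ t, c w t) =
      ∑ t, (∑ i, ∑ w ∈ b i, ∑ w' ∈ b i, ρ i w w' * c w t / ∑ t', c w t') * δ t := by
  simp only [sum_div, mul_sum, sum_mul]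
  symm
  rw [sum_comm]
  refine sum_congr rfl fun i _ => ?_
  rw [sum_comm]
  refine sum_congr rfl fun w _ => ?_
  rw [sum_comm]
  refine sum_congr rfl fun w' _ => sum_congr rfl fun t _ => ?_
  ring

lemma sum_sum_sum_mul_of_normalized (hρ : ∀ i, ∑ w ∈ b i, ∑ w' ∈ b i, ρ i w w' = 1)
    (y : ι → ℝ) :
    ∑ i, ∑ w ∈ b i, ∑ w' ∈ b i, ρ i w w' * y i = ∑ i, y i := by
  refine sum_congr rfl fun i _ => ?_
  simp only [← sum_mul, hρ i, one_mul]

lemma sum_sum_sum_mul_lower_bound_eq (hρ : ∀ i, ∑ w ∈ b i, ∑ w' ∈ b i, ρ i w w' = 1)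
    (c : α → τ → ℝ) (S : ι → τ → ℝ) (D : ι → ℝ) (δ e : τ → ℝ) :
    ∑ i, ∑ w ∈ b i, ∑ w' ∈ b i, ρ i w w' *
        (1 + (∑ t, c w t * δ t) / (∑ t, c w t) - (∑ t, e t * S i t) / D i) =
      Fintype.card ι + ∑ t, ((∑ i, ∑ w ∈ b i, ∑ w' ∈ b i, ρ i w w' * c w t / ∑ t', c w t') *
        δ t - (∑ i, S i t / D i) * e t) := by
  have hsplit : ∀ i w w', ρ i w w' *
      (1 + (∑ t, c w t * δ t) / (∑ t, c w t) - (∑ t, e t * S i t) / D i) =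
      ρ i w w' * ((∑ t, c w t * δ t) / ∑ t, c w t) +
        ρ i w w' * (1 - (∑ t, e t * S i t) / D i) := fun _ _ _ => by ring
  simp only [hsplit, sum_add_distrib, sum_sum_sum_mul_weighted_average,
    sum_sum_sum_mul_of_normalized b ρ hρ]
  have hexp : ∑ i, (∑ t, e t * S i t) / D i = ∑ t, (∑ i, S i t / D i) * e t := by
    simp only [sum_div, sum_mul]
    rw [sum_comm]
    exact sum_congr rfl fun _ _ => sum_congr rfl fun _ _ => by ring
  rw [sum_sub_distrib, hexp, sum_sub_distrib, sum_const, card_univ, nsmul_one]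
  ring

end NestedSums

theorem update_expected_counts_maximizes_lower_bound_general
    {V : Type*} {T : Type*} [Fintype T]
    (M : ℕ) (b : Fin M → Finset V)
    (q : V → T → ℝ) (hq : ∀ w t, 0 < q w t)
    (s : Fin M → V → ℝ)
    (hssum : ∀ i, ∑ w' ∈ b i, s i w' = 1)
    (r : Fin M → V → V → ℝ)
    (hrsum : ∀ i, ∀ w' ∈ b i, ∑ w ∈ b i, r i w w' = 1)
    (μ : T → ℝ)
    (A B : T → ℝ)
    (hA : ∀ t, A t = ∑ i, ∑ w ∈ b i, ∑ w' ∈ b i,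
        r i w w' * s i w' * (Real.exp (μ t) * q w t) /
          ∑ t', Real.exp (μ t') * q w t')
    (hB : ∀ t, B t = ∑ i, (∑ w' ∈ b i, q w' t) /
        ∑ t', Real.exp (μ t') * ∑ w' ∈ b i, q w' t')
    (hApos : ∀ t, 0 < A t)
    (g : (T → ℝ) → ℝ)
    (hg : ∀ δ : T → ℝ, g δ = ∑ i, ∑ w ∈ b i, ∑ w' ∈ b i, r i w w' * s i w' *
      (1 + (∑ t, Real.exp (μ t) * q w t * δ t) / (∑ t, Real.exp (μ t) * q w t)
         - (∑ t, Real.exp (μ t + δ t) * ∑ w'' ∈ b i, q w'' t) /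
             (∑ t, Real.exp (μ t) * ∑ w'' ∈ b i, q w'' t))) :
    ∀ δ : T → ℝ, g δ ≤ g (fun t => Real.log (A t / B t) - μ t) := by
  have hg_topicwise : ∀ δ, g δ = M + ∑ t, (A t * δ t - B t * exp (μ t + δ t)) := fun δ => by
    rw [hg, sum_sum_sum_mul_lower_bound_eq b _
      (fun i => sum_sum_mul_eq_one (hrsum i) (hssum i)), Fintype.card_fin]
    simp only [hA, hB]
  have hS : ∀ i t, 0 < ∑ w' ∈ b i, q w' t := fun i t =>
    sum_pos (fun w _ => hq w t) (nonempty_of_sum_ne_zero ((hssum i).trans_ne one_ne_zero))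
  have hBpos : ∀ t, 0 < B t := fun t => by
    have hbins : (univ : Finset (Fin M)).Nonempty :=
      nonempty_of_sum_ne_zero ((hA t).symm.trans_ne (hApos t).ne')
    rw [hB]
    exact sum_pos (fun i _ => div_pos (hS i t)
      (sum_pos (fun t' _ => mul_pos (exp_pos _) (hS i t')) ⟨t, mem_univ t⟩)) hbins
  intro δ
  rw [hg_topicwise, hg_topicwise]
  gcongr (M : ℝ) + ∑ t, ?_ with t
  have := mul_sub_mul_exp_le (hApos t) (hBpos t) (μ t + δ t)
  rw [add_sub_cancel, exp_log (div_pos (hApos t) (hBpos t)), mul_div_cancel₀ _ (hBpos t).ne']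
  linarith

/-- The paper's update equation for the topic weights under the
expected-counts confusion model: the vector `δ*` defined by
`e^{μ t + δ* t} = A t / B t` is a global maximizer over `ℝ^T` of the concave
lower bound `g`. -/
theorem update_expected_counts_maximizes_lower_bound
    {V : Type*} [Fintype V] {T : Type*} [Fintype T] [Nonempty T]
    (M : ℕ) (b : Fin M → Finset V) (hb : ∀ i, (b i).Nonempty)
    (q : V → T → ℝ) (hq : ∀ w t, 0 < q w t)
    (s : Fin M → V → ℝ) (hs : ∀ i, ∀ w' ∈ b i, 0 ≤ s i w')
    (hssum : ∀ i, ∑ w' ∈ b i, s i w' = 1)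
    (r : Fin M → V → V → ℝ) (hr : ∀ i, ∀ w ∈ b i, ∀ w' ∈ b i, 0 ≤ r i w w')
    (hrsum : ∀ i, ∀ w' ∈ b i, ∑ w ∈ b i, r i w w' = 1)
    (μ : T → ℝ)
    (A B : T → ℝ)
    (hA : ∀ t, A t = ∑ i, ∑ w ∈ b i, ∑ w' ∈ b i,
        r i w w' * s i w' * (Real.exp (μ t) * q w t) /
          ∑ t', Real.exp (μ t') * q w t')
    (hB : ∀ t, B t = ∑ i, (∑ w' ∈ b i, q w' t) /
        ∑ t', Real.exp (μ t') * ∑ w' ∈ b i, q w' t')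
    (hApos : ∀ t, 0 < A t)
    (g : (T → ℝ) → ℝ)
    (hg : ∀ δ : T → ℝ, g δ = ∑ i, ∑ w ∈ b i, ∑ w' ∈ b i, r i w w' * s i w' *
      (1 + (∑ t, Real.exp (μ t) * q w t * δ t) / (∑ t, Real.exp (μ t) * q w t)
         - (∑ t, Real.exp (μ t + δ t) * ∑ w'' ∈ b i, q w'' t) /
             (∑ t, Real.exp (μ t) * ∑ w'' ∈ b i, q w'' t))) :
    ∀ δ : T → ℝ, g δ ≤ g (fun t => Real.log (A t / B t) - μ t) :=
  update_expected_counts_maximizes_lower_bound_general M b q hq s hssum r hrsum μ A B hA hB hApos g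
    hg
end
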